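/- Let e be a transitive relation on a finite set E. The following are equivalent: (i) the lattice Reg(e) is semidistributive; (ii) the lattice Reg(e) is pseudocomplemented; (iii) every connected component of the preorder ⊴ (i.e., every equivalence class of the least equivalence relation on E containing e) either is a set on which ⊴ is antisymmetric, or is a two-element set {a,b} with a ≠ b, (a,b) ∈ e, and (b,a) ∈ e. -/

import Mathlib

/-!
Semidistributivity and pseudocomplementedness of `Reg(e)` are both equivalent to
0-distributivity, `x ∧ y = x ∧ z = ∅ → x ∧ (y ∨ z) = ∅`: meet-semidistributivity and
pseudocomplements each give it at once, and conversely, `Reg(e)` being finite, a maximal element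
disjoint from `x` is then the pseudocomplement of `x`. Condition (iii) says that every 2-cycle
`a ⇄ b` of `e` is isolated.

If a 2-cycle `u ⇄ v` has a neighbour `w` above it (below it is the mirror image under
`Prod.swap`), shrinking the interval `[u, w]` yields either a 3-cycle or a `w` covering the cycle;
in both cases three clopen sets of pairs with a prescribed endpoint violate 0-distributivity.

If all 2-cycles are isolated, `Reg(e)` is meet-semidistributive: given `x ∧ z = y ∧ z`, the
inclusion `int((x ∨ y) ∩ z) ⊆ x ∧ z` is shown pair by pair, by induction on the size of the interval `[a, b]`. A pair with
`[a, b] ⊆ {a, b}` lies in a transitive closure only if it lies in the generating set, a loop on a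
2-cycle is governed by the two edges of the cycle, and a pair with `(b, a) ∉ e` lies in a clopen
set `e ∩ ([a, b] \ U) × U` whose other pairs have smaller intervals. Join-semidistributivity
follows through the orthocomplement `x ↦ cl(e \ x)`, which exchanges joins and meets.
-/

/-- A binary relation (as a set of pairs) is transitive. -/
def TransRel {E : Type*} (a : Set (E × E)) : Prop :=
  ∀ x y z : E, (x, y) ∈ a → (y, z) ∈ a → (x, z) ∈ a

/-- The transitive closure of a set of pairs. -/
def tcl {E : Type*} (a : Set (E × E)) : Set (E × E) :=
  {p | Relation.TransGen (fun u v => (u, v) ∈ a) p.1 p.2}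

/-- The interior of `a` relative to `e`. -/
def tint {E : Type*} (e a : Set (E × E)) : Set (E × E) :=
  e \ tcl (e \ a)

/-- `a` is a closed subset of `e`. -/
def IsClosedIn {E : Type*} (e a : Set (E × E)) : Prop :=
  a ⊆ e ∧ TransRel a

/-- `a` is an open subset of `e`. -/
def IsOpenIn {E : Type*} (e a : Set (E × E)) : Prop :=
  a ⊆ e ∧ TransRel (e \ a)

/-- `a` is a clopen subset of `e`. -/
def IsClopenIn {E : Type*} (e a : Set (E × E)) : Prop :=
  a ⊆ e ∧ TransRel a ∧ TransRel (e \ a)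

/-- `a` is a regular closed subset of `e`. -/
def RegClosed {E : Type*} (e a : Set (E × E)) : Prop :=
  a ⊆ e ∧ a = tcl (tint e a)

/-- The reflexive preordering `x ⊴ y` associated with `e`. -/
def rle {E : Type*} (e : Set (E × E)) (x y : E) : Prop :=
  (x, y) ∈ e ∨ x = y

/-- `x ≡ y`: `x ⊴ y` and `y ⊴ x`. -/
def eqv {E : Type*} (e : Set (E × E)) (x y : E) : Prop :=
  rle e x y ∧ rle e y x

/-- `e` is square-free. -/
def SqFree {E : Type*} (e : Set (E × E)) : Prop :=
  ∀ a b x y : E, (a, b) ∈ e → rle e a x → rle e x b → rle e a y → rle e y b →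
    rle e x y ∨ rle e y x

/-- The interval `[a,b] = {x | a ⊴ x ⊴ b}`. -/
def cce {E : Type*} (e : Set (E × E)) (a b : E) : Set E :=
  {x | rle e a x ∧ rle e x b}

/-- `(a,b,U) ∈ F(e)`. -/
def Ftriple {E : Type*} (e : Set (E × E)) (a b : E) (U : Set E) : Prop :=
  (a, b) ∈ e ∧ U ⊆ cce e a b ∧ (a ≠ b → a ∉ U ∧ b ∈ U)

/-- The clopen set `⟨a,b,U⟩ = e ∩ (({a} ∪ Uᶜ) × ({b} ∪ U))`. -/
def pji {E : Type*} (e : Set (E × E)) (a b : E) (U : Set E) : Set (E × E) :=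
  e ∩ ((({a} : Set E) ∪ (cce e a b \ U)) ×ˢ (({b} : Set E) ∪ U))

/-- The set `p₋` associated with `p = ⟨a,b,U⟩`: if `a ≠ b` it is
`p \ ([a] × [b])`, and if `a = b` it is `p \ {(a,a)}`. -/
def pminus {E : Type*} (e : Set (E × E)) (a b : E) (U : Set E) : Set (E × E) :=
  {z ∈ pji e a b U | ¬ ((a ≠ b ∧ eqv e z.1 a ∧ eqv e z.2 b) ∨ (a = b ∧ z = (a, a)))}

/-- The join in `Reg(e)`. -/
def regJoin {E : Type*} (x y : Set (E × E)) : Set (E × E) := tcl (x ∪ y)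

/-- The meet in `Reg(e)`. -/
def regMeet {E : Type*} (e x y : Set (E × E)) : Set (E × E) := tcl (tint e (x ∩ y))

section

variable {E : Type*} {e r x y z : Set (E × E)} {a b c d : E}

theorem subset_tcl (r : Set (E × E)) : r ⊆ tcl r := fun _ h => Relation.TransGen.single h

theorem tcl_mono (h : x ⊆ y) : tcl x ⊆ tcl y :=
  fun _ hp => Relation.TransGen.mono (fun _ _ huv => h huv) _ _ hp

theorem transRel_tcl (r : Set (E × E)) : TransRel (tcl r) := fun _ _ _ h₁ h₂ => h₁.trans h₂

theorem tcl_subset (hy : TransRel y) (h : x ⊆ y) : tcl x ⊆ y := by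
  rintro ⟨p, q⟩ hpq
  change Relation.TransGen _ p q at hpq
  induction hpq with
  | single h' => exact h h'
  | tail _ h' ih => exact hy _ _ _ ih (h h')

theorem tcl_eq_self (hx : TransRel x) : tcl x = x :=
  (tcl_subset hx subset_rfl).antisymm (subset_tcl x)

theorem transRel_empty : TransRel (∅ : Set (E × E)) := fun _ _ _ h => absurd h (Set.notMem_empty _)

theorem rle_trans (he : TransRel e) (hab : rle e a b) (hbc : rle e b c) : rle e a c := by
  rcases hab with hab | rfl
  · rcases hbc with hbc | rfl
    · exact Or.inl (he _ _ _ hab hbc)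
    · exact Or.inl hab
  · exact hbc

theorem rle_of_reflTransGen (he : TransRel e) (hr : r ⊆ e)
    (h : Relation.ReflTransGen (fun u v => (u, v) ∈ r) a b) : rle e a b := by
  rcases Relation.reflTransGen_iff_eq_or_transGen.1 h with rfl | h
  · exact Or.inr rfl
  · exact Or.inl (tcl_subset he hr h)

theorem mem_union_of_mem_inter_of_mem_union (hx : TransRel x) (hy : TransRel y)
    (h₁ : (a, b) ∈ x ∩ y) (h₂ : (b, c) ∈ x ∪ y) : (a, c) ∈ x ∪ y :=
  h₂.imp (hx _ _ _ h₁.1) (hy _ _ _ h₁.2)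

theorem mem_union_of_mem_union_of_mem_inter (hx : TransRel x) (hy : TransRel y)
    (h₁ : (a, b) ∈ x ∪ y) (h₂ : (b, c) ∈ x ∩ y) : (a, c) ∈ x ∪ y :=
  h₁.imp (fun h => hx _ _ _ h h₂.1) (fun h => hy _ _ _ h h₂.2)

theorem tint_subset (e x : Set (E × E)) : tint e x ⊆ x :=
  fun _ hp => of_not_not fun hpx => hp.2 (subset_tcl _ ⟨hp.1, hpx⟩)

theorem tint_mono (h : x ⊆ y) : tint e x ⊆ tint e y :=
  fun _ hp => ⟨hp.1, fun hc => hp.2 (tcl_mono (Set.sdiff_subset_sdiff_right h) hc)⟩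

theorem mem_tcl_diff_of_notMem_tint {p : E × E} (hp : p ∈ e) (h : p ∉ tint e x) :
    p ∈ tcl (e \ x) :=
  of_not_not fun h' => h ⟨hp, h'⟩

theorem tcl_diff_tint_subset : tcl (e \ tint e x) ⊆ tcl (e \ x) :=
  tcl_subset (transRel_tcl _) fun _ hp => mem_tcl_diff_of_notMem_tint hp.1 hp.2

theorem mem_tint_or_mem_tint (hac : (a, c) ∈ tint e x) (hab : (a, b) ∈ e) (hbc : (b, c) ∈ e) :
    (a, b) ∈ tint e x ∨ (b, c) ∈ tint e x := by
  by_contra! h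
  exact hac.2 ((mem_tcl_diff_of_notMem_tint hab h.1).trans (mem_tcl_diff_of_notMem_tint hbc h.2))

theorem tint_eq_self (hxe : x ⊆ e) (hx : TransRel (e \ x)) : tint e x = x := by
  rw [tint, tcl_eq_self hx, Set.sdiff_sdiff_cancel_left hxe]

theorem RegClosed.transRel (hx : RegClosed e x) : TransRel x := by
  rw [hx.2]; exact transRel_tcl _

theorem regClosed_of_subset (hxe : x ⊆ e) (hx : TransRel x) (h : x ⊆ tcl (tint e x)) :
    RegClosed e x :=
  ⟨hxe, h.antisymm (tcl_subset hx (tint_subset e x))⟩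

theorem regClosed_of_clopen (hxe : x ⊆ e) (hx : TransRel x) (hx' : TransRel (e \ x)) :
    RegClosed e x :=
  regClosed_of_subset hxe hx (by rw [tint_eq_self hxe hx']; exact subset_tcl x)

theorem regClosed_empty (he : TransRel e) : RegClosed e ∅ :=
  regClosed_of_clopen (Set.empty_subset e) transRel_empty (by rwa [Set.sdiff_empty])

theorem regClosed_tcl_tint (he : TransRel e) (x : Set (E × E)) : RegClosed e (tcl (tint e x)) := by
  refine regClosed_of_subset (tcl_subset he fun _ hp => hp.1) (transRel_tcl _) (tcl_mono ?_)
  exact fun p hp => ⟨hp.1, fun hc => hp.2 (tcl_diff_tint_subset (tcl_mono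
    (Set.sdiff_subset_sdiff_right (subset_tcl _)) hc))⟩

theorem RegClosed.subset_tcl_tint (hx : RegClosed e x) (h : x ⊆ y) : x ⊆ tcl (tint e y) :=
  hx.2.le.trans (tcl_mono (tint_mono h))

theorem subset_regJoin_left (x y : Set (E × E)) : x ⊆ regJoin x y :=
  Set.subset_union_left.trans (subset_tcl _)

theorem subset_regJoin_right (x y : Set (E × E)) : y ⊆ regJoin x y :=
  Set.subset_union_right.trans (subset_tcl _)

theorem regJoin_subset (hz : TransRel z) (hx : x ⊆ z) (hy : y ⊆ z) : regJoin x y ⊆ z :=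
  tcl_subset hz (Set.union_subset hx hy)

theorem regClosed_regJoin (he : TransRel e) (hx : RegClosed e x) (hy : RegClosed e y) :
    RegClosed e (regJoin x y) :=
  regClosed_of_subset (tcl_subset he (Set.union_subset hx.1 hy.1)) (transRel_tcl _) <|
    regJoin_subset (transRel_tcl _) (hx.subset_tcl_tint (subset_regJoin_left x y))
      (hy.subset_tcl_tint (subset_regJoin_right x y))

theorem regMeet_comm (e x y : Set (E × E)) : regMeet e x y = regMeet e y x := by
  rw [regMeet, regMeet, Set.inter_comm]

theorem regMeet_subset_left (hx : RegClosed e x) : regMeet e x y ⊆ x :=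
  tcl_subset hx.transRel ((tint_subset _ _).trans Set.inter_subset_left)

theorem regMeet_mono_left (h : x ⊆ y) : regMeet e x z ⊆ regMeet e y z :=
  tcl_mono (tint_mono (Set.inter_subset_inter_left z h))

theorem regMeet_mono_right (h : y ⊆ z) : regMeet e x y ⊆ regMeet e x z :=
  tcl_mono (tint_mono (Set.inter_subset_inter_right x h))

theorem subset_regMeet {w : Set (E × E)} (hw : RegClosed e w) (hx : w ⊆ x) (hy : w ⊆ y) :
    w ⊆ regMeet e x y :=
  hw.subset_tcl_tint (Set.subset_inter hx hy)

theorem regMeet_eq_empty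
    (h : ∀ s t, (s, t) ∈ x ∩ y → ∃ m, (s, m) ∈ e \ (x ∩ y) ∧ (m, t) ∈ e \ (x ∩ y)) :
    regMeet e x y = ∅ := by
  refine Set.subset_empty_iff.1 (tcl_subset transRel_empty ?_)
  rintro ⟨s, t⟩ hst
  obtain ⟨m, hsm, hmt⟩ := h s t (tint_subset _ _ hst)
  exact hst.2 ((subset_tcl _ hsm).trans (subset_tcl _ hmt))

theorem regMeet_ne_empty {p : E × E} (h : p ∈ tint e (x ∩ y)) : regMeet e x y ≠ ∅ :=
  Set.nonempty_iff_ne_empty.1 ⟨p, subset_tcl _ h⟩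

theorem mem_of_mem_tcl_of_cce_subset (he : TransRel e) (hr : r ⊆ e) (hI : cce e a b ⊆ {a, b})
    (h : (a, b) ∈ tcl r) : (a, b) ∈ r := by
  suffices key : ∀ t, Relation.TransGen (fun u v => (u, v) ∈ r) a t → rle e t b →
      t = b → (a, b) ∈ r from key b h (Or.inr rfl) rfl
  intro t ht
  induction ht with
  | single hat => rintro - rfl; exact hat
  | @tail s t hs hst ih =>
    rintro htb rfl
    rcases hI ⟨Or.inl (tcl_subset he hr hs), Or.inl (hr hst)⟩ with rfl | rfl
    · exact hst
    · exact ih (Or.inr rfl) rfl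

theorem mem_tint_iff_of_cce_subset (he : TransRel e) (hab : (a, b) ∈ e) (hI : cce e a b ⊆ {a, b}) :
    (a, b) ∈ tint e x ↔ (a, b) ∈ x :=
  ⟨fun h => tint_subset e x h, fun h =>
    ⟨hab, fun hc => (mem_of_mem_tcl_of_cce_subset he Set.sdiff_subset hI hc).2 h⟩⟩

theorem mem_regMeet_iff_of_cce_subset (he : TransRel e) (hab : (a, b) ∈ e)
    (hI : cce e a b ⊆ {a, b}) : (a, b) ∈ regMeet e x y ↔ (a, b) ∈ x ∩ y := by
  rw [← mem_tint_iff_of_cce_subset he hab hI (x := x ∩ y)]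
  exact ⟨mem_of_mem_tcl_of_cce_subset he (fun _ h => h.1) hI, fun h => subset_tcl _ h⟩

theorem mem_tcl_of_loop (he : TransRel e) (hr : r ⊆ e) (hI : cce e a a ⊆ {a, d})
    (h : (a, a) ∈ tcl r) : (a, a) ∈ r ∨ (a, d) ∈ r ∧ (d, a) ∈ r := by
  suffices key : ∀ t, Relation.TransGen (fun u v => (u, v) ∈ r) a t → rle e t a →
      (t = a → (a, a) ∈ r ∨ (a, d) ∈ r ∧ (d, a) ∈ r) ∧ (t = d → (a, d) ∈ r) from
    (key a h (Or.inr rfl)).1 rfl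
  intro t ht
  induction ht with
  | single hat => exact fun _ => ⟨fun h => Or.inl (h ▸ hat), fun h => h ▸ hat⟩
  | @tail s t hs hst ih =>
    intro hta
    have hsa := rle_trans he (Or.inl (hr hst)) hta
    rcases hI ⟨Or.inl (tcl_subset he hr hs), hsa⟩ with rfl | rfl
    · exact ⟨fun h => (ih hsa).1 rfl, fun h => h ▸ hst⟩
    · exact ⟨fun h => Or.inr ⟨(ih hsa).2 rfl, h ▸ hst⟩, fun _ => (ih hsa).2 rfl⟩

/-! ### Meet-semidistributivity when 2-cycles are isolated -/

def TwoCyclesIsolated (e : Set (E × E)) : Prop :=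
  ∀ a b, a ≠ b → (a, b) ∈ e → (b, a) ∈ e → ∀ c, (a, c) ∈ e ∨ (c, a) ∈ e → c = a ∨ c = b

theorem TwoCyclesIsolated.mem_pair (hI : TwoCyclesIsolated e) (hab : a ≠ b) (h₁ : (a, b) ∈ e)
    (h₂ : (b, a) ∈ e) (hc : c ∈ ({a, b} : Set E)) (hcd : (c, d) ∈ e ∨ (d, c) ∈ e) :
    d ∈ ({a, b} : Set E) := by
  rcases hc with rfl | rfl
  · exact hI _ _ hab h₁ h₂ d hcd
  · exact (hI _ _ hab.symm h₂ h₁ d hcd).symm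

theorem TwoCyclesIsolated.cce_subset (hI : TwoCyclesIsolated e) (had : a ≠ d) (h₁ : (a, d) ∈ e)
    (h₂ : (d, a) ∈ e) (b : E) : cce e a b ⊆ {a, d} ∧ cce e b a ⊆ {a, d} := by
  constructor
  · rintro m ⟨ham | rfl, -⟩
    · exact hI.mem_pair had h₁ h₂ (Or.inl rfl) (Or.inl ham)
    · exact Or.inl rfl
  · rintro m ⟨-, hma | rfl⟩
    · exact hI.mem_pair had h₁ h₂ (Or.inl rfl) (Or.inr hma)
    · exact Or.inl rfl

theorem TwoCyclesIsolated.cce_subset_or_loop (hI : TwoCyclesIsolated e) (hab : (a, b) ∈ e)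
    (hba : (b, a) ∈ e) :
    cce e a b ⊆ {a, b} ∨ a = b ∧ ∃ d, a ≠ d ∧ (a, d) ∈ e ∧ (d, a) ∈ e := by
  rcases eq_or_ne a b with rfl | hne
  · by_cases hd : ∃ d, a ≠ d ∧ (a, d) ∈ e ∧ (d, a) ∈ e
    · exact Or.inr ⟨rfl, hd⟩
    refine Or.inl fun m ⟨ham, hma⟩ => Or.inl (of_not_not fun hma' => hd ?_)
    exact ⟨m, Ne.symm hma', ham.resolve_right (Ne.symm hma'), hma.resolve_right hma'⟩
  · exact Or.inl (hI.cce_subset hne hab hba b).1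

theorem TwoCyclesIsolated.ncard_cce_lt [Finite E] (he : TransRel e) (hI : TwoCyclesIsolated e)
    (hab : (a, b) ∈ e) (hba : (b, a) ∉ e) (hac : rle e a c) (hdb : rle e d b)
    (hne : (c, d) ≠ (a, b)) : (cce e c d).ncard < (cce e a b).ncard := by
  refine Set.ncard_lt_ncard ⟨fun t ht => ⟨rle_trans he hac ht.1, rle_trans he ht.2 hdb⟩,
    fun hsub => hne ?_⟩
  have hca := (hsub ⟨Or.inr rfl, Or.inl hab⟩ : a ∈ cce e c d).1
  have hbd := (hsub ⟨Or.inl hab, Or.inr rfl⟩ : b ∈ cce e c d).2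
  -- `c ⊴ a ⊴ c` and `d ⊴ b ⊴ d`; a 2-cycle at either end would be isolated from the other end
  have hc : c = a := by
    rcases hac with hac | rfl
    · rcases hca with hca | rfl
      · by_contra hne
        rcases hI a c (Ne.symm hne) hac hca b (Or.inl hab) with rfl | rfl
        · exact hba hab
        · exact hba hca
      · rfl
    · rfl
  have hd : d = b := by
    rcases hbd with hbd | rfl
    · rcases hdb with hdb | rfl
      · by_contra hne
        rcases hI b d (Ne.symm hne) hbd hdb a (Or.inr hab) with rfl | rfl
        · exact hba hab
        · exact hba hbd
      · rfl
    · rfl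
  rw [hc, hd]

theorem mem_inter_of_cce_subset (he : TransRel e) (hxe : x ⊆ e) (hye : y ⊆ e)
    (hm : regMeet e x z = regMeet e y z) (hI : cce e a b ⊆ {a, b})
    (hab : (a, b) ∈ tint e (regJoin x y ∩ z)) : (a, b) ∈ x ∩ y ∩ z := by
  obtain ⟨hW, hz⟩ := tint_subset _ _ hab
  have other : ∀ {x y}, regMeet e x z = regMeet e y z → (a, b) ∈ x → (a, b) ∈ y := fun hm hx =>
    ((mem_regMeet_iff_of_cce_subset he hab.1 hI).1
      (hm ▸ (mem_regMeet_iff_of_cce_subset he hab.1 hI).2 ⟨hx, hz⟩)).1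
  rcases mem_of_mem_tcl_of_cce_subset he (Set.union_subset hxe hye) hI hW with h | h
  · exact ⟨⟨h, other hm h⟩, hz⟩
  · exact ⟨⟨other hm.symm h, h⟩, hz⟩

theorem mem_regMeet_of_cce_subset (he : TransRel e) (hxe : x ⊆ e) (hye : y ⊆ e)
    (hm : regMeet e x z = regMeet e y z) (hI : cce e a b ⊆ {a, b})
    (hab : (a, b) ∈ tint e (regJoin x y ∩ z)) : (a, b) ∈ regMeet e x z :=
  have h := mem_inter_of_cce_subset he hxe hye hm hI hab
  (mem_regMeet_iff_of_cce_subset he hab.1 hI).2 ⟨h.1.1, h.2⟩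

theorem TwoCyclesIsolated.mem_regMeet_of_loop (he : TransRel e) (hI : TwoCyclesIsolated e)
    (hx : RegClosed e x) (hy : RegClosed e y) (hm : regMeet e x z = regMeet e y z)
    (had : a ≠ d) (h₁ : (a, d) ∈ e) (h₂ : (d, a) ∈ e)
    (haa : (a, a) ∈ tint e (regJoin x y ∩ z)) : (a, a) ∈ regMeet e x z := by
  have hIaa := (hI.cce_subset had h₁ h₂ a).1
  have hIad := (hI.cce_subset had h₁ h₂ d).1
  have hIda : cce e d a ⊆ {d, a} := Set.pair_comm a d ▸ (hI.cce_subset had h₁ h₂ d).2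
  obtain ⟨q, hq, hqxy, hqz⟩ : ∃ q, (q = (a, d) ∨ q = (d, a)) ∧ q ∈ x ∩ y ∧ q ∈ z := by
    rcases mem_tint_or_mem_tint haa h₁ h₂ with h | h
    · exact ⟨_, Or.inl rfl, mem_inter_of_cce_subset he hx.1 hy.1 hm hIad h⟩
    · exact ⟨_, Or.inr rfl, mem_inter_of_cce_subset he hx.1 hy.1 hm hIda h⟩
  have haxy : (a, a) ∈ x ∪ y := by
    rcases mem_tcl_of_loop he (Set.union_subset hx.1 hy.1) hIaa (tint_subset _ _ haa).1 with
      h | ⟨h₁, h₂⟩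
    · exact h
    rcases hq with rfl | rfl
    · exact mem_union_of_mem_inter_of_mem_union hx.transRel hy.transRel hqxy h₂
    · exact mem_union_of_mem_union_of_mem_inter hx.transRel hy.transRel h₁ hqxy
  have key : ∀ w, (a, a) ∈ w → q ∈ w → (a, a) ∈ regMeet e w z := fun w haw hqw =>
    subset_tcl _ ⟨haa.1, fun hc => by
      rcases mem_tcl_of_loop he Set.sdiff_subset hIaa hc with h | ⟨h₁, h₂⟩
      · exact h.2 ⟨haw, (tint_subset _ _ haa).2⟩
      · rcases hq with rfl | rfl
        · exact h₁.2 ⟨hqw, hqz⟩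
        · exact h₂.2 ⟨hqw, hqz⟩⟩
  rcases haxy with h | h
  · exact key x h hqxy.1
  · exact hm ▸ key y h hqxy.2

theorem regClosed_inter_diff_prod (he : TransRel e) {U : Set E} (hU : U ⊆ cce e a b) :
    RegClosed e (e ∩ (cce e a b \ U) ×ˢ U) := by
  refine regClosed_of_clopen Set.inter_subset_left ?_ ?_
  · rintro s m t ⟨-, -, hmU⟩ ⟨-, ⟨-, hmU'⟩, -⟩
    exact absurd hmU hmU'
  · rintro s m t ⟨hsm, hsm'⟩ ⟨hmt, hmt'⟩
    refine ⟨he _ _ _ hsm hmt, fun ⟨_, ⟨hs, _⟩, ht⟩ => ?_⟩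
    by_cases hmU : m ∈ U
    · exact hsm' ⟨hsm, ⟨hs, ‹_›⟩, hmU⟩
    · exact hmt' ⟨hmt, ⟨⟨rle_trans he hs.1 (Or.inl hsm), rle_trans he (Or.inl hmt) (hU ht).2⟩,
        hmU⟩, ht⟩

theorem inter_diff_prod_subset_tint {U : Set E} (hU : ∀ t ∈ U, (a, t) ∈ tint e x)
    (hU' : ∀ t ∈ cce e a b, t ≠ a → (a, t) ∈ tint e x → t ∈ U) :
    e ∩ (cce e a b \ U) ×ˢ U ⊆ tint e x := by
  rintro ⟨s, t⟩ ⟨hst, ⟨hs, hsU⟩, htU⟩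
  by_cases hsa : s = a
  · exact hsa ▸ hU t htU
  · have has : (a, s) ∈ e := hs.1.resolve_right fun h => hsa h.symm
    exact (mem_tint_or_mem_tint (hU t htU) has hst).resolve_left fun h => hsU (hU' s hs hsa h)

theorem mem_inter_of_mem_tcl_union (he : TransRel e) (hx : TransRel x) (hy : TransRel y)
    (hxy : x ∪ y ⊆ e) {U : Set E} (haU : a ∉ U) (hbU : b ∈ U)
    (hcross : ∀ c d, (c, d) ∈ x ∪ y → rle e a c → c ∉ U → d ∈ U → (c, d) ∈ x ∩ y)
    (hab : (a, b) ∈ tcl (x ∪ y)) : (a, b) ∈ x ∩ y := by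
  suffices key : ∀ s, Relation.ReflTransGen (fun u v => (u, v) ∈ x ∪ y) a s →
      ∀ u ∈ U, s = u ∨ (s, u) ∈ x ∩ y → (a, u) ∈ x ∩ y from
    key b (Relation.TransGen.to_reflTransGen hab) b hbU (Or.inl rfl)
  -- an edge entering `U` lies in `x ∩ y`, so it merges with its neighbours on the path
  intro s hs
  induction hs with
  | refl => rintro u hu (rfl | h); exacts [absurd hu haU, h]
  | @tail s t hs hst ih =>
    intro u hu htu
    have hsu : (s, u) ∈ x ∪ y := by
      rcases htu with rfl | h
      exacts [hst, mem_union_of_mem_union_of_mem_inter hx hy hst h]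
    by_cases hsU : s ∈ U
    · exact hcross a u (mem_union_of_mem_inter_of_mem_union hx hy (ih s hsU (Or.inl rfl)) hsu)
        (Or.inr rfl) haU hu
    · exact ih u hu (Or.inr (hcross s u hsu (rle_of_reflTransGen he hxy hs) hsU hu))

theorem mem_regMeet_of_forall_inner (he : TransRel e) (hx : RegClosed e x) (hy : RegClosed e y)
    (hm : regMeet e x z = regMeet e y z) (hne : a ≠ b)
    (hab : (a, b) ∈ tint e (regJoin x y ∩ z))
    (ih : ∀ c d, (c, d) ∈ tint e (regJoin x y ∩ z) → rle e a c → rle e d b → (c, d) ≠ (a, b) →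
      (c, d) ∈ regMeet e x z) :
    (a, b) ∈ regMeet e x z := by
  set O := tint e (regJoin x y ∩ z)
  -- `(a, b)` lies in the regular closed set `e ∩ ([a, b] \ U) × U ⊆ O`, all of whose other pairs
  -- are in the meet by `ih`
  set U := {t ∈ cce e a b | t ≠ a ∧ (a, t) ∈ O}
  have hU : U ⊆ cce e a b := fun t ht => ht.1
  have haU : a ∉ U := fun h => h.2.1 rfl
  have hbU : b ∈ U := ⟨⟨Or.inl hab.1, Or.inr rfl⟩, hne.symm, hab⟩
  have hpO : e ∩ (cce e a b \ U) ×ˢ U ⊆ O :=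
    inter_diff_prod_subset_tint (fun t ht => ht.2.2) fun t ht hta h => ⟨ht, hta, h⟩
  have hpm : ∀ q ∈ e ∩ (cce e a b \ U) ×ˢ U, q ≠ (a, b) → q ∈ regMeet e x z := by
    rintro ⟨c, d⟩ hcd hne'
    exact ih c d (hpO hcd) hcd.2.1.1.1 (hU hcd.2.2).2 hne'
  have hmx : regMeet e x z ⊆ x := regMeet_subset_left hx
  have hmy : regMeet e x z ⊆ y := hm ▸ regMeet_subset_left hy
  have hxy : x ∪ y ⊆ e := Set.union_subset hx.1 hy.1
  have habxy : (a, b) ∈ x ∪ y := by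
    by_contra habxy
    refine habxy (Or.inl (mem_inter_of_mem_tcl_union he hx.transRel hy.transRel hxy haU hbU ?_
      (tint_subset _ _ hab).1).1)
    intro c d hcd hac hcU hdU
    have hcb : rle e c b := rle_trans he (Or.inl (hxy hcd)) (hU hdU).2
    have h := hpm (c, d) ⟨hxy hcd, ⟨⟨hac, hcb⟩, hcU⟩, hdU⟩ fun h => habxy (h ▸ hcd)
    exact ⟨hmx h, hmy h⟩
  have key : ∀ w, regMeet e x z ⊆ w → (a, b) ∈ w → (a, b) ∈ regMeet e w z := fun w hmw habw =>
    subset_regMeet (regClosed_inter_diff_prod he hU)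
      (fun q hq => (eq_or_ne q (a, b)).elim (fun h => h ▸ habw) fun h => hmw (hpm q hq h))
      (fun q hq => (tint_subset _ _ (hpO hq)).2) ⟨hab.1, ⟨⟨Or.inr rfl, Or.inl hab.1⟩, haU⟩, hbU⟩
  rcases habxy with h | h
  · exact key x hmx h
  · exact hm ▸ key y hmy h

theorem TwoCyclesIsolated.tint_regJoin_inter_subset [Finite E] (he : TransRel e)
    (hI : TwoCyclesIsolated e) (hx : RegClosed e x) (hy : RegClosed e y)
    (hm : regMeet e x z = regMeet e y z) : tint e (regJoin x y ∩ z) ⊆ regMeet e x z := by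
  rintro ⟨a, b⟩ hab
  induction hn : (cce e a b).ncard using Nat.strong_induction_on generalizing a b with
  | _ n ih =>
  by_cases hba : (b, a) ∈ e
  · rcases hI.cce_subset_or_loop hab.1 hba with hIab | ⟨rfl, d, had, h₁, h₂⟩
    · exact mem_regMeet_of_cce_subset he hx.1 hy.1 hm hIab hab
    · exact hI.mem_regMeet_of_loop he hx hy hm had h₁ h₂ hab
  · refine mem_regMeet_of_forall_inner he hx hy hm (fun h => hba (h ▸ hab.1)) hab ?_
    intro c d hcd hac hdb hne
    exact ih _ (hn ▸ hI.ncard_cce_lt he hab.1 hba hac hdb hne) c d hcd rfl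

theorem TwoCyclesIsolated.regMeet_regJoin [Finite E] (he : TransRel e) (hI : TwoCyclesIsolated e)
    (hx : RegClosed e x) (hy : RegClosed e y) (hm : regMeet e x z = regMeet e y z) :
    regMeet e x z = regMeet e (regJoin x y) z :=
  (regMeet_mono_left (subset_regJoin_left x y)).antisymm
    (tcl_subset (transRel_tcl _) (hI.tint_regJoin_inter_subset he hx hy hm))

/-! ### The orthocomplement -/

def orth (e x : Set (E × E)) : Set (E × E) := tcl (e \ x)

theorem regClosed_orth (he : TransRel e) (hx : RegClosed e x) : RegClosed e (orth e x) := by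
  have h : tint e (e \ x) = e \ x := by
    rw [tint, Set.sdiff_sdiff_cancel_left hx.1, tcl_eq_self hx.transRel]
  have := regClosed_tcl_tint he (e \ x)
  rwa [h] at this

theorem orth_orth (hx : RegClosed e x) : orth e (orth e x) = x := hx.2.symm

theorem orth_regJoin (hx : RegClosed e x) (hy : RegClosed e y) :
    orth e (regJoin x y) = regMeet e (orth e x) (orth e y) := by
  have h : tcl (tint e x ∪ tint e y) = regJoin x y :=
    (tcl_mono (Set.union_subset_union (tint_subset e x) (tint_subset e y))).antisymm
      (regJoin_subset (transRel_tcl _) (hx.2.le.trans (tcl_mono Set.subset_union_left))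
        (hy.2.le.trans (tcl_mono Set.subset_union_right)))
  change tcl (e \ regJoin x y) = tcl (e \ tcl (e \ (tcl (e \ x) ∩ tcl (e \ y))))
  rw [Set.sdiff_inter]
  change _ = tcl (e \ tcl (tint e x ∪ tint e y))
  rw [h]

theorem orth_regMeet (he : TransRel e) (hx : RegClosed e x) (hy : RegClosed e y) :
    orth e (regMeet e x y) = regJoin (orth e x) (orth e y) := by
  have hx' := regClosed_orth he hx
  have hy' := regClosed_orth he hy
  rw [← orth_orth hx, ← orth_orth hy, ← orth_regJoin hx' hy',
    orth_orth (regClosed_regJoin he hx' hy'), orth_orth hx, orth_orth hy]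

theorem regJoin_eq_of_meetSemidistrib (he : TransRel e)
    (hSD : ∀ x y z, RegClosed e x → RegClosed e y → RegClosed e z →
      regMeet e x z = regMeet e y z → regMeet e x z = regMeet e (regJoin x y) z)
    (hx : RegClosed e x) (hy : RegClosed e y) (hz : RegClosed e z)
    (h : regJoin x z = regJoin y z) : regJoin x z = regJoin (regMeet e x y) z := by
  have hx' := regClosed_orth he hx
  have hy' := regClosed_orth he hy
  have hz' := regClosed_orth he hz
  have hSD' := hSD _ _ _ hx' hy' hz' (by rw [← orth_regJoin hx hz, ← orth_regJoin hy hz, h])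
  calc regJoin x z = orth e (regMeet e (orth e x) (orth e z)) := by
        rw [← orth_regJoin hx hz, orth_orth (regClosed_regJoin he hx hz)]
    _ = orth e (regMeet e (regJoin (orth e x) (orth e y)) (orth e z)) := by rw [hSD']
    _ = regJoin (regMeet e x y) z := by
        rw [orth_regMeet he (regClosed_regJoin he hx' hy') hz', orth_regJoin hx' hy', orth_orth hx,
          orth_orth hy, orth_orth hz]

/-! ### 0-distributivity and its failure -/

def RegZeroDistrib (e : Set (E × E)) : Prop :=
  ∀ x y z, RegClosed e x → RegClosed e y → RegClosed e z →
    regMeet e x y = ∅ → regMeet e x z = ∅ → regMeet e x (regJoin y z) = ∅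

theorem regZeroDistrib_of_meetSemidistrib
    (hSD : ∀ x y z, RegClosed e x → RegClosed e y → RegClosed e z →
      regMeet e x z = regMeet e y z → regMeet e x z = regMeet e (regJoin x y) z) :
    RegZeroDistrib e := by
  intro x y z hx hy hz hxy hxz
  rw [regMeet_comm] at hxy hxz ⊢
  rw [← hSD y z x hy hz hx (hxy.trans hxz.symm), hxy]

theorem regZeroDistrib_of_pseudocompl
    (hPC : ∀ x, RegClosed e x → ∃ y, RegClosed e y ∧ regMeet e x y = ∅ ∧
      ∀ z, RegClosed e z → regMeet e x z = ∅ → z ⊆ y) :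
    RegZeroDistrib e := by
  intro x y z hx hy hz hxy hxz
  obtain ⟨w, hw, hxw, hmax⟩ := hPC x hx
  exact Set.subset_empty_iff.1 <|
    hxw ▸ regMeet_mono_right (regJoin_subset hw.transRel (hmax y hy hxy) (hmax z hz hxz))

theorem RegZeroDistrib.exists_pseudocompl [Finite E] (he : TransRel e) (hZ : RegZeroDistrib e)
    (hx : RegClosed e x) :
    ∃ y, RegClosed e y ∧ regMeet e x y = ∅ ∧ ∀ z, RegClosed e z → regMeet e x z = ∅ → z ⊆ y := by
  obtain ⟨y, ⟨hy, hxy⟩, hmax⟩ :=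
    (Set.toFinite {w | RegClosed e w ∧ regMeet e x w = ∅}).exists_maximal
      ⟨∅, regClosed_empty he, regMeet_eq_empty fun _ _ h => absurd h.2 (Set.notMem_empty _)⟩
  refine ⟨y, hy, hxy, fun z hz hxz => (subset_regJoin_right y z).trans ?_⟩
  exact hmax ⟨regClosed_regJoin he hy hz, hZ x y z hx hy hz hxy hxz⟩ (subset_regJoin_left y z)

theorem regClosed_sep_fst (he : TransRel e) (P : E → Prop) : RegClosed e {q ∈ e | P q.1} :=
  regClosed_of_clopen (fun _ h => h.1) (fun _ _ _ h₁ h₂ => ⟨he _ _ _ h₁.1 h₂.1, h₁.2⟩)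
    fun _ _ _ h₁ h₂ => ⟨he _ _ _ h₁.1 h₂.1, fun h => h₁.2 ⟨h₁.1, h.2⟩⟩

theorem regClosed_sep_snd (he : TransRel e) (P : E → Prop) : RegClosed e {q ∈ e | P q.2} :=
  regClosed_of_clopen (fun _ h => h.1) (fun _ _ _ h₁ h₂ => ⟨he _ _ _ h₁.1 h₂.1, h₂.2⟩)
    fun _ _ _ h₁ h₂ => ⟨he _ _ _ h₁.1 h₂.1, fun h => h₂.2 ⟨h₂.1, h.2⟩⟩

theorem notMem_tcl_diff (he : TransRel e) {D : Set E} (ha : a ∉ D) (hb : b ∈ D)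
    (hD : ∀ s t, rle e a s → (s, t) ∈ e \ x → t ∈ D → s ∈ D) : (a, b) ∉ tcl (e \ x) := by
  intro h
  change Relation.TransGen _ a b at h
  induction h with
  | single h => exact ha (hD _ _ (Or.inr rfl) h hb)
  | tail hs hst ih => exact ih (hD _ _ (Or.inl (tcl_subset he Set.sdiff_subset hs)) hst hb)

theorem not_regZeroDistrib_of_threeCycle (he : TransRel e) {u v w : E} (huv : u ≠ v)
    (hvw : v ≠ w) (huw : u ≠ w) (h₁ : (u, v) ∈ e) (h₂ : (v, u) ∈ e) (h₃ : (v, w) ∈ e)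
    (h₄ : (w, u) ∈ e) : ¬ RegZeroDistrib e := by
  intro hZ
  refine regMeet_ne_empty (p := (v, u)) ?_ <| hZ {q ∈ e | q.2 = u} {q ∈ e | q.1 = v}
    {q ∈ e | q.2 = v} (regClosed_sep_snd he (· = u)) (regClosed_sep_fst he (· = v))
    (regClosed_sep_snd he (· = v)) ?_ ?_
  · refine ⟨h₂, notMem_tcl_diff he (D := {u}) huv.symm rfl ?_⟩
    rintro s t - ⟨hst, hS⟩ (ht : t = u)
    subst t
    exact (hS ⟨⟨hst, rfl⟩, .head (b := v) (Or.inr ⟨he _ _ _ hst h₁, rfl⟩)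
      (.single (Or.inl ⟨h₂, rfl⟩))⟩).elim
  · refine regMeet_eq_empty fun s t ⟨⟨_, ht⟩, _, hs⟩ => ⟨w, ⟨?_, fun h => ?_⟩, ⟨?_, fun h => ?_⟩⟩
    · exact (show s = v from hs) ▸ h₃
    · exact huw (h.1.2.symm)
    · exact (show t = u from ht) ▸ h₄
    · exact hvw h.2.2.symm
  · exact regMeet_eq_empty fun s t ⟨⟨_, ht⟩, _, ht'⟩ => absurd (ht.symm.trans ht') huv

theorem not_regZeroDistrib_of_twoCycle_cover (he : TransRel e) {u v w : E} (huv : u ≠ v)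
    (h₁ : (u, v) ∈ e) (h₂ : (v, u) ∈ e) (h₃ : (u, w) ∈ e) (hwu : (w, u) ∉ e)
    (hcover : ∀ s, (u, s) ∈ e → (s, w) ∈ e → s = u ∨ s = v ∨ eqv e w s) :
    ¬ RegZeroDistrib e := by
  intro hZ
  have huD : ¬ eqv e w u := by
    rintro ⟨hwu' | rfl, -⟩
    exacts [hwu hwu', hwu (he _ _ _ h₁ h₂)]
  have hvD : ¬ eqv e w v := by
    rintro ⟨hwv | rfl, -⟩
    exacts [hwu (he _ _ _ hwv h₂), hwu h₂]
  have hD : ∀ t, eqv e w t → (u, t) ∈ e ∧ (v, t) ∈ e := by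
    rintro t ⟨hwt | rfl, -⟩
    · exact ⟨he _ _ _ h₃ hwt, he _ _ _ h₂ (he _ _ _ h₃ hwt)⟩
    · exact ⟨h₃, he _ _ _ h₂ h₃⟩
  refine regMeet_ne_empty (p := (u, w)) ?_ <| hZ {q ∈ e | eqv e w q.2} {q ∈ e | q.1 = u}
    {q ∈ e | q.1 = v} (regClosed_sep_snd he (eqv e w)) (regClosed_sep_fst he (· = u))
    (regClosed_sep_fst he (· = v)) ?_ ?_
  · refine ⟨h₃, notMem_tcl_diff he (D := {t | eqv e w t}) huD ⟨Or.inr rfl, Or.inr rfl⟩ ?_⟩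
    rintro s t hus ⟨hst, hS⟩ ht
    have hsw : (s, w) ∈ e := ht.2.elim (he _ _ _ hst) fun h => h ▸ hst
    rcases hus with hus | rfl
    · rcases hcover s hus hsw with rfl | rfl | h
      · exact (hS ⟨⟨hst, ht⟩, subset_tcl _ (Or.inl ⟨hst, rfl⟩)⟩).elim
      · exact (hS ⟨⟨hst, ht⟩, subset_tcl _ (Or.inr ⟨hst, rfl⟩)⟩).elim
      · exact h
    · exact (hS ⟨⟨hst, ht⟩, subset_tcl _ (Or.inl ⟨hst, rfl⟩)⟩).elim
  · refine regMeet_eq_empty fun s t ⟨⟨_, ht⟩, _, hs⟩ =>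
      ⟨v, ⟨(show s = u from hs) ▸ h₁, fun h => hvD h.1.2⟩, ⟨(hD t ht).2, fun h => huv h.2.2.symm⟩⟩
  · refine regMeet_eq_empty fun s t ⟨⟨_, ht⟩, _, hs⟩ =>
      ⟨u, ⟨(show s = v from hs) ▸ h₂, fun h => huD h.1.2⟩, ⟨(hD t ht).1, fun h => huv h.2.2⟩⟩

theorem not_regZeroDistrib_of_twoCycle_lt [Finite E] (he : TransRel e) {u v w : E} (huv : u ≠ v)
    (h₁ : (u, v) ∈ e) (h₂ : (v, u) ∈ e) (h₃ : (u, w) ∈ e) (hwu : (w, u) ∉ e) :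
    ¬ RegZeroDistrib e := by
  induction hn : (cce e u w).ncard using Nat.strong_induction_on generalizing w with
  | _ n ih =>
  by_cases hcover : ∀ s, (u, s) ∈ e → (s, w) ∈ e → s = u ∨ s = v ∨ eqv e w s
  · exact not_regZeroDistrib_of_twoCycle_cover he huv h₁ h₂ h₃ hwu hcover
  push Not at hcover
  obtain ⟨s, hus, hsw, hsu, hsv, hws⟩ := hcover
  by_cases hsu' : (s, u) ∈ e
  · exact not_regZeroDistrib_of_threeCycle he huv (Ne.symm hsv) (Ne.symm hsu) h₁ h₂
      (he _ _ _ h₂ hus) hsu'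
  refine ih _ (hn ▸ Set.ncard_lt_ncard ⟨fun t ht => ⟨ht.1, rle_trans he ht.2 (Or.inl hsw)⟩,
    fun hsub => hws ⟨(hsub ⟨Or.inl h₃, Or.inr rfl⟩).2, Or.inl hsw⟩⟩) hus hsu' rfl

theorem transRel_preimage_swap (he : TransRel e) : TransRel (Prod.swap ⁻¹' e) :=
  fun _ _ _ h₁ h₂ => he _ _ _ h₂ h₁

theorem tcl_preimage_swap (x : Set (E × E)) : tcl (Prod.swap ⁻¹' x) = Prod.swap ⁻¹' tcl x := by
  ext ⟨a, b⟩
  exact Relation.transGen_swap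

theorem tint_preimage_swap : tint (Prod.swap ⁻¹' e) (Prod.swap ⁻¹' x) = Prod.swap ⁻¹' tint e x := by
  rw [tint, tint, ← Set.preimage_sdiff, tcl_preimage_swap, ← Set.preimage_sdiff]

theorem RegClosed.preimage_swap (hx : RegClosed e x) :
    RegClosed (Prod.swap ⁻¹' e) (Prod.swap ⁻¹' x) :=
  ⟨Set.preimage_mono hx.1, by rw [tint_preimage_swap, tcl_preimage_swap, ← hx.2]⟩

theorem regMeet_preimage_swap :
    regMeet (Prod.swap ⁻¹' e) (Prod.swap ⁻¹' x) (Prod.swap ⁻¹' y) =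
      Prod.swap ⁻¹' regMeet e x y := by
  rw [regMeet, regMeet, ← Set.preimage_inter, tint_preimage_swap, tcl_preimage_swap]

theorem regJoin_preimage_swap :
    regJoin (Prod.swap ⁻¹' x) (Prod.swap ⁻¹' y) = Prod.swap ⁻¹' regJoin x y := by
  rw [regJoin, regJoin, ← Set.preimage_union, tcl_preimage_swap]

theorem RegZeroDistrib.preimage_swap (hZ : RegZeroDistrib e) :
    RegZeroDistrib (Prod.swap ⁻¹' e) := by
  have hinv : ∀ x : Set (E × E), Prod.swap ⁻¹' (Prod.swap ⁻¹' x) = x := fun x => by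
    ext ⟨a, b⟩; rfl
  have hreg : ∀ {x}, RegClosed (Prod.swap ⁻¹' e) x → RegClosed e (Prod.swap ⁻¹' x) := fun hx => by
    simpa only [hinv] using hx.preimage_swap
  have hmeet : ∀ x y, regMeet e (Prod.swap ⁻¹' x) (Prod.swap ⁻¹' y) =
      Prod.swap ⁻¹' regMeet (Prod.swap ⁻¹' e) x y := fun x y => by
    rw [← regMeet_preimage_swap, hinv]
  intro x y z hx hy hz hxy hxz
  apply Set.preimage_injective.2 Prod.swap_surjective
  rw [← hmeet, ← regJoin_preimage_swap, Set.preimage_empty]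
  exact hZ _ _ _ (hreg hx) (hreg hy) (hreg hz) (by rw [hmeet, hxy, Set.preimage_empty])
    (by rw [hmeet, hxz, Set.preimage_empty])

theorem RegZeroDistrib.twoCyclesIsolated [Finite E] (he : TransRel e) (hZ : RegZeroDistrib e) :
    TwoCyclesIsolated e := by
  intro a b hab h₁ h₂ c hc
  by_contra! hcab
  by_cases hcyc : (a, c) ∈ e ∧ (c, a) ∈ e
  · exact not_regZeroDistrib_of_threeCycle he hab (Ne.symm hcab.2) (Ne.symm hcab.1) h₁ h₂
      (he _ _ _ h₂ hcyc.1) hcyc.2 hZ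
  rcases hc with hac | hca
  · exact not_regZeroDistrib_of_twoCycle_lt he hab h₁ h₂ hac (fun hca => hcyc ⟨hac, hca⟩) hZ
  · exact not_regZeroDistrib_of_twoCycle_lt (transRel_preimage_swap he) hab h₂ h₁ hca
      (fun hac => hcyc ⟨hac, hca⟩) hZ.preimage_swap

/-! ### Connected components -/

theorem mem_iff_mem_of_eqvGen {S : Set E} (hS : ∀ s t, (s, t) ∈ e → (s ∈ S ↔ t ∈ S))
    (h : Relation.EqvGen (fun s t => (s, t) ∈ e) a b) : a ∈ S ↔ b ∈ S := by
  induction h with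
  | rel _ _ h => exact hS _ _ h
  | refl => exact Iff.rfl
  | symm _ _ _ ih => exact ih.symm
  | trans _ _ _ _ _ ih₁ ih₂ => exact ih₁.trans ih₂

theorem components_iff_twoCyclesIsolated :
    (∀ c : E,
        (∀ u v : E, Relation.EqvGen (fun s t => (s, t) ∈ e) c u →
          Relation.EqvGen (fun s t => (s, t) ∈ e) c v →
          (u, v) ∈ e → (v, u) ∈ e → u = v) ∨
        (∃ a b : E, a ≠ b ∧ {x | Relation.EqvGen (fun s t => (s, t) ∈ e) c x} = {a, b} ∧
          (a, b) ∈ e ∧ (b, a) ∈ e)) ↔ TwoCyclesIsolated e := by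
  constructor
  · intro hC a b hab h₁ h₂ c hc
    rcases hC a with hanti | ⟨a', b', -, hcomp, -⟩
    · exact absurd (hanti a b (.refl a) (.rel _ _ h₁) h₁ h₂) hab
    have hmem : ∀ t, Relation.EqvGen (fun s t => (s, t) ∈ e) a t → t ∈ ({a', b'} : Set E) :=
      fun t ht => hcomp ▸ ht
    have ha := hmem a (.refl a)
    have hb := hmem b (.rel _ _ h₁)
    have hc := hmem c (hc.elim (fun h => .rel _ _ h) fun h => .symm _ _ (.rel _ _ h))
    simp only [Set.mem_insert_iff, Set.mem_singleton_iff] at ha hb hc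
    grind
  · intro hI c
    by_cases hanti : ∀ u v : E, Relation.EqvGen (fun s t => (s, t) ∈ e) c u →
        Relation.EqvGen (fun s t => (s, t) ∈ e) c v → (u, v) ∈ e → (v, u) ∈ e → u = v
    · exact Or.inl hanti
    push Not at hanti
    obtain ⟨u, v, hcu, hcv, h₁, h₂, huv⟩ := hanti
    have hpair : ∀ s t, (s, t) ∈ e → (s ∈ ({u, v} : Set E) ↔ t ∈ ({u, v} : Set E)) :=
      fun s t hst => ⟨fun hs => hI.mem_pair huv h₁ h₂ hs (Or.inl hst),
        fun ht => hI.mem_pair huv h₁ h₂ ht (Or.inr hst)⟩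
    refine Or.inr ⟨u, v, huv, Set.ext fun t => ⟨fun hct => ?_, ?_⟩, h₁, h₂⟩
    · exact (mem_iff_mem_of_eqvGen hpair (.trans _ _ _ (.symm _ _ hcu) hct)).1 (Or.inl rfl)
    · rintro (rfl | rfl)
      exacts [hcu, hcv]

end

/-- for a transitive relation `e` on a finite set, `Reg(e)` is semidistributive
iff it is pseudocomplemented, iff every connected component of the preorder `⊴` is either
antisymmetric or a two-element set `{a,b}` with `(a,b) ∈ e` and `(b,a) ∈ e`. -/
theorem regClosed_semidistrib_iff_pseudocomplemented_iff {E : Type*} [Finite E]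
    (e : Set (E × E)) (he : TransRel e) :
    ((∀ x y z : Set (E × E), RegClosed e x → RegClosed e y → RegClosed e z →
        (regJoin x z = regJoin y z → regJoin x z = regJoin (regMeet e x y) z) ∧
        (regMeet e x z = regMeet e y z → regMeet e x z = regMeet e (regJoin x y) z)) ↔
      (∀ c : E,
        (∀ u v : E, Relation.EqvGen (fun s t => (s, t) ∈ e) c u →
          Relation.EqvGen (fun s t => (s, t) ∈ e) c v →
          (u, v) ∈ e → (v, u) ∈ e → u = v) ∨
        (∃ a b : E, a ≠ b ∧ {x | Relation.EqvGen (fun s t => (s, t) ∈ e) c x} = {a, b} ∧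
          (a, b) ∈ e ∧ (b, a) ∈ e))) ∧
    ((∀ x : Set (E × E), RegClosed e x →
        ∃ y, RegClosed e y ∧ regMeet e x y = ∅ ∧
          ∀ z, RegClosed e z → regMeet e x z = ∅ → z ⊆ y) ↔
      (∀ c : E,
        (∀ u v : E, Relation.EqvGen (fun s t => (s, t) ∈ e) c u →
          Relation.EqvGen (fun s t => (s, t) ∈ e) c v →
          (u, v) ∈ e → (v, u) ∈ e → u = v) ∨
        (∃ a b : E, a ≠ b ∧ {x | Relation.EqvGen (fun s t => (s, t) ∈ e) c x} = {a, b} ∧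
          (a, b) ∈ e ∧ (b, a) ∈ e))) := by
  rw [components_iff_twoCyclesIsolated]
  refine ⟨⟨fun hSD => ?_, fun hI x y z hx hy hz => ⟨?_, hI.regMeet_regJoin he hx hy⟩⟩,
    ⟨fun hPC => ?_, fun hI x hx => ?_⟩⟩
  · exact (regZeroDistrib_of_meetSemidistrib fun x y z hx hy hz => (hSD x y z hx hy hz).2)
      |>.twoCyclesIsolated he
  · exact regJoin_eq_of_meetSemidistrib he (fun _ _ _ hx hy _ => hI.regMeet_regJoin he hx hy)
      hx hy hz
  · exact (regZeroDistrib_of_pseudocompl hPC).twoCyclesIsolated he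
  · exact (regZeroDistrib_of_meetSemidistrib fun _ _ _ hx hy _ => hI.regMeet_regJoin he hx hy)
      |>.exists_pseudocompl he hx
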